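/- arXiv:2604.15248 — 3 statements merged into one kernel-verified Lean document; each statement's English description precedes it below -/
import Mathlib

section
/- There do not exist functions ρ₀, ρ₁ : {0,1}^n → {-1,1} and σ : {0,1}^n → ℝ such that for all x, y ∈ {0,1}^n, ρ₀(x) ρ₁(y) σ(x+y) = (-1)^{x·y}, provided n ≥ 1. -/
open Finset Real

/-- numeric value of a bit -/
def bit (b : Bool) : ℕ := if b then 1 else 0

/-- quadratic function Q(x) = Σ_{i<j} x_i x_j -/
def Q {n : ℕ} (x : Fin n → Bool) : ℕ :=
  ∑ i : Fin n, ∑ j : Fin n, if i < j then bit (x i) * bit (x j) else 0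

/-- Hamming weight -/
def wt {n : ℕ} (x : Fin n → Bool) : ℕ := ∑ i : Fin n, bit (x i)

/-- inner product (before reduction mod 2) -/
def ip {n : ℕ} (x y : Fin n → Bool) : ℕ := ∑ i : Fin n, bit (x i) * bit (y i)

/-- bitwise XOR -/
def xorv {n : ℕ} (x y : Fin n → Bool) : Fin n → Bool := fun i => xor (x i) (y i)


/-! On the rectangle `{0, e} × {0, e}`, with `e` a unit vector, the products of `(-1)^{x·y}` along
the two diagonals are `-1` and `1`, whereas for `ρ₀ x * ρ₁ y * σ (x + y)` both are the same product
`ρ₀ 0 * ρ₀ e * ρ₁ 0 * ρ₁ e`, times `σ 0 ^ 2` and `σ e ^ 2` respectively, so they cannot have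
opposite signs. -/

theorem not_forall_mul_mul_eq_of_cross_neg {α : Type*} (op : α → α → α) (χ : α → α → ℝ)
    {x x' y y' : α} (hxy : op x y = op x' y') (hxy' : op x y' = op x' y)
    (hχ : χ x y * χ x' y' = -(χ x y' * χ x' y)) (hne : χ x y * χ x' y' ≠ 0)
    (ρ₀ ρ₁ σ : α → ℝ) : ¬ ∀ a b, ρ₀ a * ρ₁ b * σ (op a b) = χ a b := by
  intro h
  simp only [← h, hxy, hxy'] at hχ hne
  have hP : ρ₀ x * ρ₀ x' * ρ₁ y * ρ₁ y' * (σ (op x' y') ^ 2 + σ (op x' y) ^ 2) = 0 := by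
    linear_combination hχ
  have hsum : σ (op x' y') ^ 2 + σ (op x' y) ^ 2 ≠ 0 := by
    have : σ (op x' y') ≠ 0 := by intro h0; simp [h0] at hne
    positivity
  exact hne (by linear_combination (mul_eq_zero.mp hP).resolve_right hsum * σ (op x' y') ^ 2)

theorem xorv_false_left {n : ℕ} (x : Fin n → Bool) : xorv (fun _ => false) x = x := by
  funext i; simp [xorv]

theorem xorv_false_right {n : ℕ} (x : Fin n → Bool) : xorv x (fun _ => false) = x := by
  funext i; simp [xorv]

theorem xorv_self {n : ℕ} (x : Fin n → Bool) : xorv x x = fun _ => false := by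
  funext i; simp [xorv]

theorem ip_false_left {n : ℕ} (x : Fin n → Bool) : ip (fun _ => false) x = 0 := by
  simp [ip, bit]

theorem ip_false_right {n : ℕ} (x : Fin n → Bool) : ip x (fun _ => false) = 0 := by
  simp [ip, bit]

theorem ip_indicator_self {n : ℕ} (j : Fin n) :
    ip (fun i => decide (i = j)) (fun i => decide (i = j)) = 1 := by
  simp [ip, bit]

theorem no_exact_factorization {n : ℕ} (hn : 1 ≤ n) :
    ¬ ∃ (ρ₀ ρ₁ : (Fin n → Bool) → ℝ) (σ : (Fin n → Bool) → ℝ),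
      (∀ x, ρ₀ x = -1 ∨ ρ₀ x = 1) ∧ (∀ x, ρ₁ x = -1 ∨ ρ₁ x = 1) ∧
      (∀ x y, ρ₀ x * ρ₁ y * σ (xorv x y) = (-1 : ℝ) ^ (ip x y)) := by
  rintro ⟨ρ₀, ρ₁, σ, -, -, h⟩
  set e : Fin n → Bool := fun i => decide (i = ⟨0, hn⟩)
  refine not_forall_mul_mul_eq_of_cross_neg xorv (fun x y => (-1 : ℝ) ^ ip x y)
    (x := fun _ => false) (x' := e) (y := fun _ => false) (y' := e) ?_ ?_ ?_ ?_ ρ₀ ρ₁ σ h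
  · rw [xorv_false_left, xorv_self]
  · rw [xorv_false_left, xorv_false_right]
  · simp only [ip_false_left, ip_false_right, ip_indicator_self, e]
    norm_num
  · simp only [ip_false_left, ip_indicator_self, e]
    norm_num
end

section
/- Let σ : {0,1}^n → ℝ be defined by σ(x) = √2 · (-1)^{Q(x)} if |x| is odd and σ(x) = 0 if |x| is even, where Q(x) = Σ_{i<j} x_i x_j. Then its Fourier transform σ̂(x) = (1/√(2^n)) Σ_y (-1)^{x·y} σ(y) satisfies σ̂(x) = √2 · sin(π(n - 2|x|)/4) for all x. In particular, if n is odd then |σ̂(x)| = 1 for all x. -/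
open Finset Real

noncomputable def σodd {n : ℕ} (x : Fin n → Bool) : ℝ :=
  if Odd (wt x) then Real.sqrt 2 * (-1 : ℝ) ^ (Q x) else 0

noncomputable def hatσodd {n : ℕ} (x : Fin n → Bool) : ℝ :=
  (Real.sqrt (2 ^ n))⁻¹ * ∑ y : Fin n → Bool, (-1 : ℝ) ^ (ip x y) * σodd y

/-!
For odd `|y|`, the identity `|y|² = |y| + 2 Q(y)` gives `Q(y) ≡ (|y| - 1)/2 (mod 2)`, so
`(-1)^Q(y) = Im(i^|y|)`; for even `|y|` that imaginary part vanishes. Hence `σ(y) = √2 Im(i^|y|)`,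
and the Fourier sum of `i^|y|` factors over the coordinates into
`(1 - i)^|x| (1 + i)^(n - |x|) = (√2)^n e^{iπ(n - 2|x|)/4}`. For odd `n` the angle is an odd
multiple of `π/4`, where `√2 sin` takes the values `±1`.
-/

theorem Fintype.sum_mul_sum_self_eq_sum_mul_self_add_two_mul {ι R : Type*} [Fintype ι]
    [LinearOrder ι] [CommSemiring R] (f : ι → R) :
    (∑ i, f i) * ∑ i, f i = ∑ i, f i * f i + 2 * ∑ i, ∑ j, if i < j then f i * f j else 0 := by
  have split (i j : ι) : f i * f j = (if i < j then f i * f j else 0) +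
      (if j < i then f j * f i else 0) + (if i = j then f i * f i else 0) := by
    rcases lt_trichotomy i j with h | rfl | h
    · simp [h, h.not_gt, h.ne]
    · simp
    · simp [h, h.not_gt, h.ne', mul_comm]
  rw [sum_mul_sum, Finset.sum_congr rfl fun i _ => Finset.sum_congr rfl fun j _ => split i j]
  simp only [sum_add_distrib, sum_ite_eq]
  rw [sum_comm (f := fun i j => if j < i then f j * f i else 0)]
  ring

theorem wt_le {n : ℕ} (x : Fin n → Bool) : wt x ≤ n := by
  simpa [wt] using sum_le_card_nsmul univ (fun i => bit (x i)) 1 fun i _ => by cases x i <;> decide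

theorem wt_mul_self {n : ℕ} (x : Fin n → Bool) : wt x * wt x = wt x + 2 * Q x := by
  have bit_mul_self (b : Bool) : bit b * bit b = bit b := by cases b <;> rfl
  simp only [wt, Q, Fintype.sum_mul_sum_self_eq_sum_mul_self_add_two_mul, bit_mul_self]

theorem sum_neg_one_pow_ip_mul_pow_wt {R : Type*} [CommRing R] {n : ℕ} (x : Fin n → Bool)
    (z : R) :
    ∑ y : Fin n → Bool, (-1) ^ ip x y * z ^ wt y = (1 - z) ^ wt x * (1 + z) ^ (n - wt x) := by
  have factor (y : Fin n → Bool) :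
      (-1 : R) ^ ip x y * z ^ wt y = ∏ i, (-1) ^ (bit (x i) * bit (y i)) * z ^ bit (y i) := by
    rw [prod_mul_distrib, prod_pow_eq_pow_sum, prod_pow_eq_pow_sum, ip, wt]
  have coordinate (b : Bool) :
      ∑ c : Bool, (-1 : R) ^ (bit b * bit c) * z ^ bit c = if b then 1 - z else 1 + z := by
    cases b <;> simp [bit] <;> ring
  have card_true : #{i | x i = true} = wt x := by
    rw [card_filter]; rfl
  have card_false : #{i | ¬x i = true} = n - wt x := by
    rw [← card_true, filter_not, card_sdiff_of_subset (filter_subset _ _), card_univ,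
      Fintype.card_fin]
  simp_rw [factor]
  rw [← Fintype.prod_sum fun i c => (-1 : R) ^ (bit (x i) * bit c) * z ^ bit c]
  simp_rw [coordinate]
  rw [prod_ite, prod_const, prod_const, card_true, card_false]

section Complex

open Complex

theorem σodd_eq_sqrt_two_mul_im_I_pow_wt {n : ℕ} (y : Fin n → Bool) :
    σodd y = √2 * (I ^ wt y).im := by
  rcases Nat.even_or_odd' (wt y) with ⟨t, ht | ht⟩
  · have hI : I ^ wt y = ((-1 : ℝ) ^ t : ℝ) := by
      rw [ht, pow_mul, I_sq]; push_cast; rfl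
    rw [σodd, if_neg (by rw [ht]; simp), hI, ofReal_im, mul_zero]
  · have hQ : Q y = 2 * (t * t) + t := by
      have h := wt_mul_self y
      rw [ht] at h
      nlinarith
    have hI : I ^ wt y = ((-1 : ℝ) ^ t : ℝ) * I := by
      rw [ht, pow_succ, pow_mul, I_sq]; push_cast; rfl
    rw [σodd, if_pos (by rw [ht]; exact odd_two_mul_add_one t), hI, im_ofReal_mul, I_im,
      mul_one, hQ, pow_add, pow_mul, neg_one_sq, one_pow, one_mul]

theorem hatσodd_eq_im_sum {n : ℕ} (x : Fin n → Bool) :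
    hatσodd x = √2 / √(2 ^ n) * (∑ y : Fin n → Bool, (-1 : ℂ) ^ ip x y * I ^ wt y).im := by
  have im_neg_one_pow_mul (k : ℕ) (z : ℂ) : ((-1 : ℂ) ^ k * z).im = (-1 : ℝ) ^ k * z.im := by
    rw [← im_ofReal_mul]; push_cast; rfl
  simp only [hatσodd, σodd_eq_sqrt_two_mul_im_I_pow_wt, im_sum, im_neg_one_pow_mul, mul_sum]
  refine sum_congr rfl fun y _ => ?_
  ring

theorem one_add_I_eq_sqrt_two_mul_exp : 1 + I = √2 * exp (↑(π / 4) * I) := by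
  apply Complex.ext <;>
    simp only [re_ofReal_mul, im_ofReal_mul, exp_ofReal_mul_I_re, exp_ofReal_mul_I_im,
      Real.cos_pi_div_four, Real.sin_pi_div_four] <;> simp [← mul_div_assoc]

theorem one_sub_I_eq_sqrt_two_mul_exp : 1 - I = √2 * exp (↑(-(π / 4)) * I) := by
  apply Complex.ext <;>
    simp only [re_ofReal_mul, im_ofReal_mul, exp_ofReal_mul_I_re, exp_ofReal_mul_I_im,
      Real.cos_neg, Real.sin_neg, Real.cos_pi_div_four, Real.sin_pi_div_four] <;>
    simp [← mul_div_assoc]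

theorem one_sub_I_pow_mul_one_add_I_pow {k n : ℕ} (hk : k ≤ n) :
    (1 - I) ^ k * (1 + I) ^ (n - k) = (√2 : ℂ) ^ n * exp (↑(π * (n - 2 * k) / 4) * I) := by
  rw [one_sub_I_eq_sqrt_two_mul_exp, one_add_I_eq_sqrt_two_mul_exp, mul_pow, mul_pow,
    ← Complex.exp_nat_mul, ← Complex.exp_nat_mul, mul_mul_mul_comm, ← pow_add,
    Nat.add_sub_cancel' hk, ← Complex.exp_add]
  congr 2
  push_cast [Nat.cast_sub hk]
  ring

theorem im_sqrt_two_pow_mul_exp_mul_I (n : ℕ) (θ : ℝ) :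
    ((√2 : ℂ) ^ n * exp (θ * I)).im = √2 ^ n * Real.sin θ := by
  rw [← ofReal_pow, im_ofReal_mul, exp_ofReal_mul_I_im]

end Complex

theorem abs_sqrt_two_mul_sin_pi_mul_div_four_of_odd {m : ℤ} (hm : Odd m) :
    |√2 * sin (π * m / 4)| = 1 := by
  obtain ⟨k, rfl⟩ := hm
  have hcos : cos (2 * (π * ↑(2 * k + 1) / 4)) = 0 :=
    cos_eq_zero_iff.2 ⟨k, by push_cast; ring⟩
  have hsq : (√2 * sin (π * ↑(2 * k + 1) / 4)) ^ 2 = 1 := by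
    rw [mul_pow, sq_sqrt zero_le_two, sin_sq_eq_half_sub, hcos]
    norm_num
  rw [← pow_eq_one_iff_of_nonneg (abs_nonneg _) two_ne_zero, sq_abs, hsq]

theorem hatσodd_eq {n : ℕ} :
    (∀ x : Fin n → Bool,
      hatσodd x = Real.sqrt 2 * Real.sin (Real.pi * ((n : ℝ) - 2 * (wt x : ℝ)) / 4)) ∧
    (Odd n → ∀ x : Fin n → Bool, |hatσodd x| = 1) := by
  have sqrt_two_pow : √((2 : ℝ) ^ n) = √2 ^ n := by
    rw [← sqrt_sq (by positivity : (0 : ℝ) ≤ √2 ^ n), ← pow_mul, mul_comm, pow_mul,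
      sq_sqrt zero_le_two]
  have formula (x : Fin n → Bool) :
      hatσodd x = √2 * sin (π * ((n : ℝ) - 2 * (wt x : ℝ)) / 4) := by
    rw [hatσodd_eq_im_sum, sum_neg_one_pow_ip_mul_pow_wt,
      one_sub_I_pow_mul_one_add_I_pow (wt_le x), im_sqrt_two_pow_mul_exp_mul_I, sqrt_two_pow]
    field_simp
  refine ⟨formula, fun hn x => ?_⟩
  have hodd : Odd ((n : ℤ) - 2 * wt x) := (Int.odd_coe_nat n).2 hn |>.sub_even (even_two_mul _)
  simpa [formula] using abs_sqrt_two_mul_sin_pi_mul_div_four_of_odd hodd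
end

section
/- Let ρ₀(x) = ρ₁(x) = (-1)^{Q(x)} and let σ(x) = √2 (-1)^{Q(x)} for |x| odd, σ(x) = 0 for |x| even. Then for all x, y ∈ {0,1}^n: ρ₀(x)ρ₁(y)σ(x+y) = √2 · (-1)^{x·y} when |x+y| is odd, and ρ₀(x)ρ₁(y)σ(x+y) = 0 when |x+y| is even. -/
open Finset Real

/-!
`Q x` counts the pairs of ones of `x`, so `Q x = C(|x|, 2)`; moreover `|x| + |y| = |x + y| + 2 x·y`.
Whenever `a + b = w + 2c`, expanding binomials gives `C(a,2) + C(b,2) + ab ≡ C(w,2) + c (mod 2)`.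
If `|x + y|` is odd then one of `|x|, |y|` is even, hence `Q x + Q y + Q (x + y) ≡ x·y (mod 2)`,
which is the sign identity.
-/

theorem Nat.add_choose_two (a b : ℕ) : (a + b).choose 2 = a.choose 2 + b.choose 2 + a * b := by
  induction b with
  | zero => simp
  | succ b ih =>
    rw [← add_assoc, Nat.choose_succ_succ, ih, Nat.choose_succ_succ, Nat.choose_one_right,
      Nat.choose_one_right]
    ring

theorem Nat.choose_two_add_choose_two_modEq {a b w c : ℕ} (h : a + b = w + 2 * c) :
    a.choose 2 + b.choose 2 + a * b ≡ w.choose 2 + c [MOD 2] := by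
  have key :
      a.choose 2 + b.choose 2 + a * b = w.choose 2 + 2 * c.choose 2 + c * c + 2 * (w * c) := by
    rw [← Nat.add_choose_two, h, two_mul, Nat.add_choose_two, Nat.add_choose_two]
    ring
  rw [key, Nat.ModEq]
  rcases Nat.even_or_odd c with ⟨k, rfl⟩ | ⟨k, rfl⟩ <;> ring_nf <;> omega

lemma bit_add_bit (a b : Bool) : bit a + bit b = bit (xor a b) + 2 * (bit a * bit b) := by
  cases a <;> cases b <;> rfl

lemma wt_add_wt {n : ℕ} (x y : Fin n → Bool) : wt x + wt y = wt (xorv x y) + 2 * ip x y := by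
  simp only [wt, ip, xorv, mul_sum, ← sum_add_distrib, bit_add_bit]

lemma Q_succ {n : ℕ} (x : Fin (n + 1) → Bool) :
    Q x = bit (x 0) * wt (Fin.tail x) + Q (Fin.tail x) := by
  simp [Q, wt, Fin.sum_univ_succ, Fin.succ_lt_succ_iff, Fin.succ_pos, mul_sum, Fin.tail]

lemma Q_eq_choose_wt {n : ℕ} (x : Fin n → Bool) : Q x = (wt x).choose 2 := by
  induction n with
  | zero => simp [Q, wt]
  | succ n ih =>
    have hwt : wt x = bit (x 0) + wt (Fin.tail x) := Fin.sum_univ_succ _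
    rw [Q_succ, ih, hwt, Nat.add_choose_two]
    cases x 0 <;> simp [bit, add_comm]

lemma Q_add_Q_add_wt_mul_wt_modEq {n : ℕ} (x y : Fin n → Bool) :
    Q x + Q y + wt x * wt y ≡ Q (xorv x y) + ip x y [MOD 2] := by
  simp only [Q_eq_choose_wt]
  exact Nat.choose_two_add_choose_two_modEq (wt_add_wt x y)

theorem rho_sigma_odd {n : ℕ} (x y : Fin n → Bool) :
    (Odd (wt (xorv x y)) →
      ((-1 : ℝ) ^ (Q x)) * ((-1 : ℝ) ^ (Q y)) * σodd (xorv x y)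
        = Real.sqrt 2 * (-1 : ℝ) ^ (ip x y)) ∧
    (Even (wt (xorv x y)) →
      ((-1 : ℝ) ^ (Q x)) * ((-1 : ℝ) ^ (Q y)) * σodd (xorv x y) = 0) := by
  refine ⟨fun hodd => ?_, fun heven => ?_⟩
  · have hwt := wt_add_wt x y
    have hmod : _ % 2 = _ % 2 := Q_add_Q_add_wt_mul_wt_modEq x y
    have hprod : wt x * wt y % 2 = 0 := by
      rw [← Nat.even_iff, Nat.even_mul, Nat.even_iff, Nat.even_iff]
      rw [Nat.odd_iff] at hodd
      omega
    have hsign : (-1 : ℝ) ^ (Q x + Q y + Q (xorv x y)) = (-1) ^ ip x y := by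
      refine neg_one_pow_congr ?_
      rw [Nat.even_iff, Nat.even_iff]
      omega
    rw [σodd, if_pos hodd, ← hsign, pow_add, pow_add]
    ring
  · rw [σodd, if_neg (Nat.not_odd_iff_even.mpr heven), mul_zero]
end
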